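/- Let G₁ be a finite simple graph with minimum degree 2 and maximum degree Δ₁, let n ≥ 3 be a natural number, and assume G₁ has order n₁ > n with exactly n vertices of degree Δ₁, and that the alliance polynomial A(G₁;x) is symmetric (an even or odd function of x). If n < 2(Δ₁ − (n₁ − n)) and A(G₁;x) is a monic polynomial of degree 2n − n₁ + Δ₁, then A_{2(n−n₁)+Δ₁−2}(G₁) > n. -/

import Mathlib

open Polynomial Finset

/-- Number of neighbors of `v` inside the set `S` (denoted δ_S(v)). -/
def SimpleGraph.degIn {V : Type*} [Fintype V] [DecidableEq V]
    (G : SimpleGraph V) [DecidableRel G.Adj] (S : Finset V) (v : V) : ℕ :=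
  (S.filter (fun u => G.Adj v u)).card

/-- Number of neighbors of `v` outside the set `S` (denoted δ_{S̄}(v)). -/
def SimpleGraph.degOut {V : Type*} [Fintype V] [DecidableEq V]
    (G : SimpleGraph V) [DecidableRel G.Adj] (S : Finset V) (v : V) : ℕ :=
  (Sᶜ.filter (fun u => G.Adj v u)).card

/-- `S` is an exact defensive `k`-alliance in `G`: the induced subgraph `⟨S⟩` is connected
(in particular `S` is nonempty) and `k = k_S = min_{v ∈ S} (δ_S(v) - δ_{S̄}(v))`. -/
def SimpleGraph.IsExactAlliance {V : Type*} [Fintype V] [DecidableEq V]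
    (G : SimpleGraph V) [DecidableRel G.Adj] (S : Finset V) (k : ℤ) : Prop :=
  (G.induce (S : Set V)).Connected ∧
    (∀ v ∈ S, k ≤ (G.degIn S v : ℤ) - (G.degOut S v : ℤ)) ∧
    (∃ v ∈ S, (G.degIn S v : ℤ) - (G.degOut S v : ℤ) = k)

/-- `A_k(G)`: the number of exact defensive `k`-alliances in `G`. -/
noncomputable def SimpleGraph.allianceCoeff {V : Type*} [Fintype V] [DecidableEq V]
    (G : SimpleGraph V) [DecidableRel G.Adj] (k : ℤ) : ℕ :=
  Set.ncard {S : Finset V | G.IsExactAlliance S k}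

/-- The alliance polynomial `A(G;x) = Σ_{k=-Δ}^{Δ} A_k(G) x^{n+k}`, where `n` is the order and
`Δ` the maximum degree of `G`, regarded as a real polynomial. -/
noncomputable def SimpleGraph.alliancePoly {V : Type*} [Fintype V] [DecidableEq V]
    (G : SimpleGraph V) [DecidableRel G.Adj] : Polynomial ℝ :=
  ∑ k ∈ Finset.Icc (-(G.maxDegree : ℤ)) (G.maxDegree : ℤ),
    (G.allianceCoeff k : ℝ) • X ^ (((Fintype.card V : ℤ) + k).toNat)

/-!
Let `U` be the `n` vertices of maximum degree `Δ₁`, `m = n₁ - n` and `c = Δ₁ - m`. Every vertex of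
`U` has at least `c` neighbours in `U`, and `n < 2c` forces any two non-adjacent vertices of a
subset of `U` missing at most two vertices to share a neighbour there, so such subsets are
connected. Their values are `2 d - Δ₁`, with `d` the least inner degree, so `U` has value at least
`K = 2c - Δ₁`. The degree of `A(G₁;x)` says that no alliance has value above `K`, and monicity
that `U` is the only one of value `K`; hence every `U \ {u}` has value exactly `K - 2`. The
witnesses `u₀` of `U` and `u₁` of `U \ {u₀}` are adjacent to all vertices outside `U`, and so
would be a witness of value `K - 4` of `U \ {u₀, u₁}`. Three such vertices cannot all neighbour a
vertex of degree `2` outside `U`, so `U \ {u₀, u₁}` is an `(n+1)`-st exact `(K-2)`-alliance.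
-/

namespace SimpleGraph

variable {V : Type*} {G : SimpleGraph V}

theorem induce_connected_of_adj_or_exists_common {S : Finset V} (hS : S.Nonempty)
    (h : ∀ x ∈ S, ∀ y ∈ S, x ≠ y → ¬ G.Adj x y → ∃ z ∈ S, G.Adj x z ∧ G.Adj z y) :
    (G.induce (S : Set V)).Connected := by
  rw [connected_iff]
  refine ⟨?_, hS.coe_sort⟩
  rintro ⟨x, hx⟩ ⟨y, hy⟩
  rcases eq_or_ne x y with rfl | hxy
  · rfl
  by_cases hadj : G.Adj x y
  · exact Adj.reachable (by simpa using hadj)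
  obtain ⟨z, hz, hxz, hzy⟩ := h x hx y hy hxy hadj
  exact (Adj.reachable (v := ⟨z, hz⟩) (by simpa using hxz)).trans
    (Adj.reachable (by simpa using hzy))

variable [Fintype V] [DecidableRel G.Adj] {S T : Finset V} {u v w : V} {k : ℤ}

theorem card_le_degree_of_forall_adj (h : ∀ v ∈ T, G.Adj v w) : #T ≤ G.degree w := by
  rw [← card_neighborFinset_eq_degree]
  exact card_le_card fun v hv => (mem_neighborFinset _ _ _).2 (h v hv).symm

variable [DecidableEq V]

theorem degIn_add_degOut (S : Finset V) (v : V) : G.degIn S v + G.degOut S v = G.degree v := by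
  rw [degIn, degOut, ← card_union_of_disjoint (disjoint_filter_filter disjoint_compl_right),
    ← filter_union, union_compl, ← card_neighborFinset_eq_degree, neighborFinset_eq_filter]

theorem degIn_le_degIn_erase_add_one (S : Finset V) (u v : V) :
    G.degIn S v ≤ G.degIn (S.erase u) v + 1 := by
  have := pred_card_le_card_erase (s := {z ∈ S | G.Adj v z}) (a := u)
  rw [degIn, degIn, filter_erase]
  omega

theorem degIn_le_degIn_add_card_sdiff (S T : Finset V) (v : V) :
    G.degIn T v ≤ G.degIn S v + #(T \ S) :=
  calc #{z ∈ T | G.Adj v z} ≤ #({z ∈ S | G.Adj v z} ∪ T \ S) :=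
        card_le_card fun z hz => by
          simp only [mem_filter, mem_union, mem_sdiff] at hz ⊢
          tauto
    _ ≤ _ := card_union_le _ _

theorem adj_of_degIn_add_card_compl_le (h : G.degIn S v + #Sᶜ ≤ G.degree v) (hw : w ∉ S) :
    G.Adj v w := by
  have hout : #{z ∈ Sᶜ | G.Adj v z} = #Sᶜ :=
    le_antisymm (card_filter_le _ _) (by have := G.degIn_add_degOut S v; rw [degOut] at this; omega)
  exact card_filter_eq_iff.1 hout w (mem_compl.2 hw)

/-- Two non-adjacent vertices without a common neighbour have disjoint neighbourhoods
in `S \ {x, y}`. -/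
theorem induce_connected_of_card_lt (hS : S.Nonempty) {d : ℕ} (hd : ∀ v ∈ S, d ≤ G.degIn S v)
    (hcard : #S < 2 * d + 2) : (G.induce (S : Set V)).Connected := by
  refine induce_connected_of_adj_or_exists_common hS fun x hx y hy hxy hadj => ?_
  by_contra! hno
  have hdisj : Disjoint {z ∈ S | G.Adj x z} {z ∈ S | G.Adj y z} :=
    Finset.disjoint_left.2 fun z hzx hzy =>
      hno z (mem_filter.1 hzx).1 (mem_filter.1 hzx).2 (mem_filter.1 hzy).2.symm
  have hsub : {z ∈ S | G.Adj x z} ∪ {z ∈ S | G.Adj y z} ⊆ (S.erase x).erase y := by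
    intro z hz
    simp only [mem_union, mem_filter] at hz
    rcases hz with ⟨hz, hxz⟩ | ⟨hz, hyz⟩
    · exact mem_erase.2 ⟨fun h => hadj (h ▸ hxz), mem_erase.2 ⟨(G.ne_of_adj hxz).symm, hz⟩⟩
    · exact mem_erase.2 ⟨(G.ne_of_adj hyz).symm,
        mem_erase.2 ⟨fun h => hadj (h ▸ hyz).symm, hz⟩⟩
  have hle := card_le_card hsub
  rw [card_union_of_disjoint hdisj, card_erase_of_mem (mem_erase.2 ⟨hxy.symm, hy⟩),
    card_erase_of_mem hx] at hle
  have := one_lt_card.2 ⟨x, hx, y, hy, hxy⟩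
  have := hd x hx
  have := hd y hy
  rw [degIn] at *
  omega

theorem exists_isExactAlliance (hconn : (G.induce (S : Set V)).Connected) :
    ∃ k, G.IsExactAlliance S k := by
  obtain ⟨⟨v₀, hv₀⟩⟩ := hconn.nonempty
  have hS : S.Nonempty := ⟨v₀, hv₀⟩
  let val : V → ℤ := fun v => G.degIn S v - G.degOut S v
  refine ⟨(S.image val).min' (hS.image val), hconn,
    fun v hv => min'_le _ _ (mem_image_of_mem val hv), ?_⟩
  simpa using min'_mem (S.image val) (hS.image val)

theorem IsExactAlliance.mem_Icc (h : G.IsExactAlliance S k) :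
    k ∈ Icc (-(G.maxDegree : ℤ)) G.maxDegree := by
  obtain ⟨v, -, hv⟩ := h.2.2
  have := G.degIn_add_degOut S v
  have := G.degree_le_maxDegree v
  rw [Finset.mem_Icc]
  omega

theorem card_le_allianceCoeff {𝒮 : Finset (Finset V)} (h : ∀ S ∈ 𝒮, G.IsExactAlliance S k) :
    #𝒮 ≤ G.allianceCoeff k := by
  rw [allianceCoeff, ← Set.ncard_coe_finset]
  exact Set.ncard_le_ncard h (Set.toFinite _)

theorem IsExactAlliance.allianceCoeff_ne_zero (h : G.IsExactAlliance S k) :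
    G.allianceCoeff k ≠ 0 :=
  Nat.one_le_iff_ne_zero.1 (card_le_allianceCoeff (𝒮 := {S}) (by simpa using h))

theorem IsExactAlliance.eq_of_allianceCoeff_le_one (h1 : G.allianceCoeff k ≤ 1)
    (hS : G.IsExactAlliance S k) (hT : G.IsExactAlliance T k) : S = T := by
  by_contra hST
  have := card_le_allianceCoeff (G := G) (k := k) (𝒮 := {S, T}) (by simp [hS, hT])
  rw [card_pair hST] at this
  omega

theorem coeff_alliancePoly (hk : k ∈ Icc (-(G.maxDegree : ℤ)) G.maxDegree) :
    G.alliancePoly.coeff (Fintype.card V + k).toNat = G.allianceCoeff k := by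
  have hΔ : G.maxDegree ≤ Fintype.card V :=
    G.maxDegree_le_of_forall_degree_le _ fun v => (G.degree_lt_card_verts v).le
  rw [alliancePoly, Polynomial.finsetSum_coeff, sum_eq_single_of_mem k hk]
  · simp
  · intro j hj hjk
    rw [mem_Icc] at hj hk
    rw [Polynomial.coeff_smul, Polynomial.coeff_X_pow, if_neg (by omega), smul_zero]

theorem IsExactAlliance.card_add_le_natDegree (h : G.IsExactAlliance S k) :
    (Fintype.card V : ℤ) + k ≤ G.alliancePoly.natDegree := by
  have hne : G.alliancePoly.coeff (Fintype.card V + k).toNat ≠ 0 := by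
    rw [coeff_alliancePoly h.mem_Icc]
    exact_mod_cast h.allianceCoeff_ne_zero
  have := Polynomial.le_natDegree_of_ne_zero hne
  omega

theorem allianceCoeff_eq_one_of_monic (hmonic : G.alliancePoly.Monic)
    (hdeg : (G.alliancePoly.natDegree : ℤ) = Fintype.card V + k)
    (hk : k ∈ Icc (-(G.maxDegree : ℤ)) G.maxDegree) : G.allianceCoeff k = 1 := by
  have h := coeff_alliancePoly hk
  rwa [← hdeg, Int.toNat_natCast, hmonic.coeff_natDegree, eq_comm, Nat.cast_eq_one] at h

/-- Values `2 d - Δ` all have the parity of `k`, so a lower bound `k` and an upper bound below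
`k + 2` pin the value down. -/
theorem isExactAlliance_of_le_degIn {Δ : ℕ} {c : ℤ} (hk : k + Δ = 2 * c)
    (hconn : (G.induce (S : Set V)).Connected) (hdeg : ∀ v ∈ S, G.degree v = Δ)
    (hlow : ∀ v ∈ S, c ≤ G.degIn S v) (hup : ∀ j, G.IsExactAlliance S j → j < k + 2) :
    G.IsExactAlliance S k := by
  obtain ⟨j, hj⟩ := exists_isExactAlliance hconn
  obtain ⟨v, hv, hvj⟩ := hj.2.2
  have := G.degIn_add_degOut S v
  have := hdeg v hv
  have := hlow v hv
  have := hup j hj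
  obtain rfl : j = k := by omega
  exact hj

theorem card_lt_allianceCoeff_of_forall_erase {U : Finset V}
    (herase : ∀ u ∈ U, G.IsExactAlliance (U.erase u) k) (hS : G.IsExactAlliance S k)
    (hcard : #S + 1 ≠ #U) : #U < G.allianceCoeff k := by
  have hSnew : S ∉ U.image U.erase := by
    simp only [mem_image, not_exists, not_and]
    rintro u hu rfl
    exact hcard (card_erase_add_one hu)
  calc #U < #(insert S (U.image U.erase)) := by
        rw [card_insert_of_notMem hSnew, card_image_of_injOn (erase_injOn U)]
        omega
    _ ≤ _ := card_le_allianceCoeff (by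
        simp only [mem_insert, mem_image, forall_eq_or_imp, forall_exists_index, and_imp,
          forall_apply_eq_imp_iff₂]
        exact ⟨hS, herase⟩)

section TopAlliance

variable {U : Finset V} {c : ℕ}

theorem le_degIn_of_degree_eq (hv : G.degree v = c + #Uᶜ) : c ≤ G.degIn U v := by
  have := G.degIn_add_degOut U v
  have : G.degOut U v ≤ #Uᶜ := card_filter_le _ _
  omega

theorem adj_of_degIn_le (hv : G.degree v = c + #Uᶜ) (hc : G.degIn U v ≤ c) (hw : w ∉ U) :
    G.Adj v w :=
  adj_of_degIn_add_card_compl_le (by omega) hw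

theorem induce_connected_of_card_le_add_two (hU : ∀ v ∈ U, G.degree v = c + #Uᶜ)
    (hcU : #U < 2 * c) (hSU : S ⊆ U) (hS : S.Nonempty) (h2 : #U ≤ #S + 2) :
    (G.induce (S : Set V)).Connected := by
  have := card_sdiff_of_subset hSU
  have := card_le_card hSU
  refine induce_connected_of_card_lt hS (d := c - #(U \ S)) (fun v hv => ?_) (by omega)
  have := le_degIn_of_degree_eq (hU v (hSU hv))
  have := G.degIn_le_degIn_add_card_sdiff S U v
  omega

theorem isExactAlliance_top (hU : ∀ v ∈ U, G.degree v = c + #Uᶜ) (hcU : #U < 2 * c)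
    (hUne : U.Nonempty) (htop : ∀ S k, G.IsExactAlliance S k → k ≤ c - #Uᶜ) :
    G.IsExactAlliance U (c - #Uᶜ) :=
  isExactAlliance_of_le_degIn (c := c) (by push_cast; ring)
    (induce_connected_of_card_le_add_two hU hcU subset_rfl hUne (by omega)) hU
    (fun v hv => by exact_mod_cast le_degIn_of_degree_eq (hU v hv))
    (fun j hj => by linarith [htop U j hj])

theorem isExactAlliance_sub_two (hU : ∀ v ∈ U, G.degree v = c + #Uᶜ) (hcU : #U < 2 * c)
    (htop : ∀ S k, G.IsExactAlliance S k → k ≤ c - #Uᶜ)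
    (hunique : G.allianceCoeff (c - #Uᶜ) ≤ 1) (hUK : G.IsExactAlliance U (c - #Uᶜ))
    (hSU : S ⊆ U) (hSne : S ≠ U) (hS : S.Nonempty) (h2 : #U ≤ #S + 2)
    (hlow : ∀ v ∈ S, c ≤ G.degIn S v + 1) :
    G.IsExactAlliance S (c - #Uᶜ - 2) := by
  refine isExactAlliance_of_le_degIn (c := c - 1) (by push_cast; ring)
    (induce_connected_of_card_le_add_two hU hcU hSU hS h2) (fun v hv => hU v (hSU hv))
    (fun v hv => by have := hlow v hv; omega) (fun j hj => ?_)
  have hj_ne : j ≠ c - #Uᶜ := fun h =>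
    hSne ((h ▸ hj).eq_of_allianceCoeff_le_one hunique hUK)
  have := htop S j hj
  omega

theorem isExactAlliance_erase (hU : ∀ v ∈ U, G.degree v = c + #Uᶜ) (hcU : #U < 2 * c)
    (htop : ∀ S k, G.IsExactAlliance S k → k ≤ c - #Uᶜ)
    (hunique : G.allianceCoeff (c - #Uᶜ) ≤ 1) (hUK : G.IsExactAlliance U (c - #Uᶜ))
    (hn : 2 ≤ #U) (hu : u ∈ U) :
    G.IsExactAlliance (U.erase u) (c - #Uᶜ - 2) := by
  have := card_erase_of_mem hu
  refine isExactAlliance_sub_two hU hcU htop hunique hUK (erase_subset u U) (erase_ne_self.2 hu)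
    (card_pos.1 (by omega)) (by omega) fun v hv => ?_
  have := le_degIn_of_degree_eq (hU v (mem_of_mem_erase hv))
  have := G.degIn_le_degIn_erase_add_one U u v
  omega

theorem isExactAlliance_erase_erase (hU : ∀ v ∈ U, G.degree v = c + #Uᶜ) (hcU : #U < 2 * c)
    (htop : ∀ S k, G.IsExactAlliance S k → k ≤ c - #Uᶜ)
    (hunique : G.allianceCoeff (c - #Uᶜ) ≤ 1) (hUK : G.IsExactAlliance U (c - #Uᶜ))
    {u₀ u₁ : V} (hn : 3 ≤ #U) (hw : w ∉ U) (hdw : G.degree w ≤ 2) (hu₀ : u₀ ∈ U)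
    (hu₁ : u₁ ∈ U.erase u₀) (h₀ : G.Adj u₀ w) (h₁ : G.Adj u₁ w) :
    G.IsExactAlliance ((U.erase u₀).erase u₁) (c - #Uᶜ - 2) := by
  have hcard : #((U.erase u₀).erase u₁) + 2 = #U := by
    rw [card_erase_of_mem hu₁, card_erase_of_mem hu₀]
    omega
  refine isExactAlliance_sub_two hU hcU htop hunique hUK
    ((erase_subset _ _).trans (erase_subset _ _)) (fun h => by rw [h] at hcard; omega)
    (card_pos.1 (by omega)) (by omega) fun v hv => ?_
  by_contra! hlow
  have hvU := mem_of_mem_erase (mem_of_mem_erase hv)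
  have := G.degIn_le_degIn_erase_add_one U u₀ v
  have := G.degIn_le_degIn_erase_add_one (U.erase u₀) u₁ v
  have hvw : G.Adj v w := adj_of_degIn_le (hU v hvU) (by omega) hw
  have h3 : #{u₀, u₁, v} = 3 :=
    card_eq_three.2 ⟨u₀, u₁, v, (ne_of_mem_erase hu₁).symm,
      (ne_of_mem_erase (mem_of_mem_erase hv)).symm, (ne_of_mem_erase hv).symm, rfl⟩
  have := card_le_degree_of_forall_adj (G := G) (T := {u₀, u₁, v}) (w := w) (by
    simp only [mem_insert, mem_singleton, forall_eq_or_imp, forall_eq]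
    exact ⟨h₀, h₁, hvw⟩)
  omega

theorem lt_allianceCoeff_of_unique_top (hU : ∀ v ∈ U, G.degree v = c + #Uᶜ)
    (hn : 3 ≤ #U) (hcU : #U < 2 * c) (htop : ∀ S k, G.IsExactAlliance S k → k ≤ c - #Uᶜ)
    (hunique : G.allianceCoeff (c - #Uᶜ) ≤ 1) (hw : w ∉ U) (hdw : G.degree w ≤ 2) :
    #U < G.allianceCoeff (c - #Uᶜ - 2) := by
  have hUK := isExactAlliance_top hU hcU (card_pos.1 (by omega)) htop
  have herase := fun u (hu : u ∈ U) ↦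
    isExactAlliance_erase hU hcU htop hunique hUK (by omega) hu
  obtain ⟨u₀, hu₀, hval₀⟩ := hUK.2.2
  obtain ⟨u₁, hu₁, hval₁⟩ := (herase u₀ hu₀).2.2
  have h₀ : G.Adj u₀ w := adj_of_degIn_le (hU u₀ hu₀)
    (by have := G.degIn_add_degOut U u₀; have := hU u₀ hu₀; omega) hw
  have h₁ : G.Adj u₁ w := by
    have hu₁U := mem_of_mem_erase hu₁
    have := G.degIn_add_degOut (U.erase u₀) u₁
    have := G.degIn_le_degIn_erase_add_one U u₀ u₁
    exact adj_of_degIn_le (hU u₁ hu₁U) (by have := hU u₁ hu₁U; omega) hw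
  exact card_lt_allianceCoeff_of_forall_erase herase
    (isExactAlliance_erase_erase hU hcU htop hunique hUK hn hw hdw hu₀ hu₁ h₀ h₁)
    (by rw [card_erase_of_mem hu₁, card_erase_of_mem hu₀]; omega)

end TopAlliance

end SimpleGraph

theorem allianceCoeff_gt_of_monic_general
    {W : Type*} [Fintype W] [DecidableEq W]
    (G₁ : SimpleGraph W) [DecidableRel G₁.Adj] (n : ℕ) (hn : 3 ≤ n)
    (hn₁ : n < Fintype.card W)
    (hmin : G₁.minDegree = 2)
    (hmax : (Finset.univ.filter (fun v : W => G₁.degree v = G₁.maxDegree)).card = n)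
    (hlt : (n : ℤ) < 2 * ((G₁.maxDegree : ℤ) - ((Fintype.card W : ℤ) - (n : ℤ))))
    (hmonic : G₁.alliancePoly.Monic)
    (hdeg : (G₁.alliancePoly.natDegree : ℤ) =
      2 * (n : ℤ) - (Fintype.card W : ℤ) + (G₁.maxDegree : ℤ)) :
    n < G₁.allianceCoeff
      (2 * ((n : ℤ) - (Fintype.card W : ℤ)) + (G₁.maxDegree : ℤ) - 2) := by
  set U := univ.filter fun v : W => G₁.degree v = G₁.maxDegree
  have hcompl : U.card + Uᶜ.card = Fintype.card W := card_add_card_compl U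
  have hU : ∀ v ∈ U, G₁.degree v = (G₁.maxDegree - Uᶜ.card) + Uᶜ.card := fun v hv => by
    rw [(mem_filter.1 hv).2]
    omega
  have : Nonempty W := Fintype.card_pos_iff.1 (by omega)
  obtain ⟨w, hw⟩ := G₁.exists_minimal_degree_vertex
  have hwU : w ∉ U := fun h => by
    have := hU w h
    omega
  have key := SimpleGraph.lt_allianceCoeff_of_unique_top hU (by omega) (by omega)
    (fun S k h => by have := h.card_add_le_natDegree; omega)
    (SimpleGraph.allianceCoeff_eq_one_of_monic hmonic (by omega) (by rw [mem_Icc]; omega)).le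
    hwU (by omega)
  convert key using 2 <;> omega

/-- Let `G₁` have minimum degree `2`, order `n₁ > n ≥ 3` with exactly `n`
vertices of maximum degree `Δ₁` and symmetric alliance polynomial. If `n < 2(Δ₁ - (n₁ - n))`
and `A(G₁;x)` is a monic polynomial of degree `2n - n₁ + Δ₁`, then
`A_{2(n-n₁)+Δ₁-2}(G₁) > n`. -/
theorem allianceCoeff_gt_of_monic
    {W : Type*} [Fintype W] [DecidableEq W]
    (G₁ : SimpleGraph W) [DecidableRel G₁.Adj] (n : ℕ) (hn : 3 ≤ n)
    (hn₁ : n < Fintype.card W)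
    (hmin : G₁.minDegree = 2)
    (hmax : (Finset.univ.filter (fun v : W => G₁.degree v = G₁.maxDegree)).card = n)
    (hsym : (∀ x : ℝ, G₁.alliancePoly.eval (-x) = G₁.alliancePoly.eval x) ∨
      (∀ x : ℝ, G₁.alliancePoly.eval (-x) = -G₁.alliancePoly.eval x))
    (hlt : (n : ℤ) < 2 * ((G₁.maxDegree : ℤ) - ((Fintype.card W : ℤ) - (n : ℤ))))
    (hmonic : G₁.alliancePoly.Monic)
    (hdeg : (G₁.alliancePoly.natDegree : ℤ) =
      2 * (n : ℤ) - (Fintype.card W : ℤ) + (G₁.maxDegree : ℤ)) :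
    n < G₁.allianceCoeff
      (2 * ((n : ℤ) - (Fintype.card W : ℤ)) + (G₁.maxDegree : ℤ) - 2) :=
  allianceCoeff_gt_of_monic_general G₁ n hn hn₁ hmin hmax hlt hmonic hdeg
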